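/- arXiv:1007.0257 — 2 statements merged into one kernel-verified Lean document; each statement's English description precedes it below -/
import Mathlib

section
/- Let m, n be positive integers with m ≥ 2, let G = C_m ⊕ C_{mn}, and let {g_1, g_2} be a generating set of G consisting of two distinct elements with ord(g_2) = mn. Then the sequence S = g_1^{m-1} · g_2^{mn-1} · (−g_1 + g_2)^{m-1} has length 2m + mn − 3 (which equals η(G) − 1) and has no short zero-sum subsequence. -/
/-!
Let `H = ⟨g₂⟩`. Since `g₁, g₂` generate `G` and `|H| = mn`, the image of `g₁` in `G ⧸ H` has
order `|G| / mn = m`. A zero-sum subsequence `g₁^a g₂^b (-g₁+g₂)^c` has `(a - c) g₁ ∈ H`, and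
`a, c < m` forces `a = c`; the sum is then `(a + b) g₂`, so `mn ∣ a + b`. But
`0 < a + b ≤ 2a + b ≤ mn` gives `a + b = mn`, hence `a = 0` and `b = mn`, which exceeds the
multiplicity `mn - 1` of `g₂`.
-/

open AddSubgroup QuotientAddGroup

namespace Multiset

variable {α : Type*} [DecidableEq α]

lemma exists_le_le_eq_add_of_le_add {s t u : Multiset α} (h : s ≤ t + u) :
    ∃ t' ≤ t, ∃ u' ≤ u, s = t' + u' :=
  ⟨s - u, Multiset.sub_le_iff_le_add.2 h, s ∩ u, inter_le_right, (sub_add_inter s u).symm⟩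

lemma exists_eq_of_le_replicate_add_replicate_add_replicate {s : Multiset α} {p q r : ℕ}
    {x y z : α} (h : s ≤ replicate p x + replicate q y + replicate r z) :
    ∃ a ≤ p, ∃ b ≤ q, ∃ c ≤ r, s = replicate a x + replicate b y + replicate c z := by
  obtain ⟨s₁, hs₁, s₃, hs₃, rfl⟩ := exists_le_le_eq_add_of_le_add h
  obtain ⟨s₁, hs₁', s₂, hs₂, rfl⟩ := exists_le_le_eq_add_of_le_add hs₁
  obtain ⟨a, ha, rfl⟩ := le_replicate_iff.1 hs₁'
  obtain ⟨b, hb, rfl⟩ := le_replicate_iff.1 hs₂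
  obtain ⟨c, hc, rfl⟩ := le_replicate_iff.1 hs₃
  exact ⟨a, ha, b, hb, c, hc, rfl⟩

end Multiset

section Quotient

variable {G : Type*} [AddCommGroup G] {g h : G}

lemma mem_zmultiples_mk_of_closure_pair_eq_top (hgen : closure ({g, h} : Set G) = ⊤)
    (x : G ⧸ zmultiples h) : x ∈ zmultiples (g : G ⧸ zmultiples h) := by
  induction x using QuotientAddGroup.induction_on with
  | H y =>
    obtain ⟨i, j, rfl⟩ := mem_closure_pair.1 (hgen ▸ mem_top y : y ∈ closure {g, h})
    refine ⟨i, ?_⟩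
    simp

lemma addOrderOf_mk_mul_addOrderOf_eq_card (hgen : closure ({g, h} : Set G) = ⊤) :
    addOrderOf (g : G ⧸ zmultiples h) * addOrderOf h = Nat.card G := by
  rw [addOrderOf_eq_card_of_forall_mem_zmultiples (mem_zmultiples_mk_of_closure_pair_eq_top hgen),
    ← Nat.card_zmultiples, ← card_eq_card_quotient_mul_card_addSubgroup]

lemma eq_and_addOrderOf_dvd_of_nsmul_add_nsmul_add_nsmul_neg_add_eq_zero {a b c : ℕ}
    (ha : a < addOrderOf (g : G ⧸ zmultiples h)) (hc : c < addOrderOf (g : G ⧸ zmultiples h))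
    (hsum : a • g + b • h + c • (-g + h) = 0) : a = c ∧ addOrderOf h ∣ a + b := by
  have hsum' : ((a : ℤ) - c) • g = (-(b : ℤ) - c) • h := by
    rw [smul_add, smul_neg, ← natCast_zsmul, ← natCast_zsmul, ← natCast_zsmul,
      ← natCast_zsmul] at hsum
    rw [sub_smul, sub_smul, neg_smul]
    linear_combination (norm := abel) hsum
  have hdvd : (addOrderOf (g : G ⧸ zmultiples h) : ℤ) ∣ (a : ℤ) - c := by
    rw [addOrderOf_dvd_iff_zsmul_eq_zero, ← QuotientAddGroup.mk_zsmul, eq_zero_iff, hsum']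
    exact zsmul_mem_zmultiples h _
  have hac : a = c := by
    have := Int.eq_zero_of_dvd_of_natAbs_lt_natAbs hdvd (by simp only [Int.natAbs_natCast]; omega)
    omega
  subst hac
  refine ⟨rfl, addOrderOf_dvd_iff_nsmul_eq_zero.2 ?_⟩
  rw [add_smul]
  rw [smul_add, smul_neg] at hsum
  linear_combination (norm := abel) hsum

end Quotient

theorem stmt_1_general (m n : ℕ) (hm : 2 ≤ m) (hn : 0 < n)
    (g1 g2 : ZMod m × ZMod (m * n))
    (hg2 : addOrderOf g2 = m * n)
    (hgen : AddSubgroup.closure ({g1, g2} : Set (ZMod m × ZMod (m * n))) = ⊤) :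
    (Multiset.replicate (m - 1) g1 + Multiset.replicate (m * n - 1) g2 +
        Multiset.replicate (m - 1) (-g1 + g2)).card = 2 * m + m * n - 3 ∧
    ¬ ∃ T ≤ Multiset.replicate (m - 1) g1 + Multiset.replicate (m * n - 1) g2 +
        Multiset.replicate (m - 1) (-g1 + g2),
        T ≠ 0 ∧ T.sum = 0 ∧ Multiset.card T ≤ m * n := by
  have hmn : 0 < m * n := Nat.mul_pos (by omega) hn
  have hmle : m ≤ m * n := Nat.le_mul_of_pos_right m hn
  refine ⟨by simp only [Multiset.card_add, Multiset.card_replicate]; omega, ?_⟩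
  rintro ⟨T, hT, hT0, hTsum, hTcard⟩
  obtain ⟨a, ha, b, hb, c, hc, rfl⟩ :=
    Multiset.exists_eq_of_le_replicate_add_replicate_add_replicate hT
  have hord : addOrderOf (g1 : _ ⧸ zmultiples g2) = m := by
    have := addOrderOf_mk_mul_addOrderOf_eq_card hgen
    rw [hg2, Nat.card_prod, Nat.card_zmod, Nat.card_zmod] at this
    exact Nat.eq_of_mul_eq_mul_right hmn this
  simp only [Multiset.sum_add, Multiset.sum_replicate, Multiset.card_add,
    Multiset.card_replicate] at hTsum hTcard
  obtain ⟨rfl, hdvd⟩ := eq_and_addOrderOf_dvd_of_nsmul_add_nsmul_add_nsmul_neg_add_eq_zero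
    (by omega) (by omega) hTsum
  have hab : a + b ≠ 0 := by
    rintro hab
    obtain ⟨rfl, rfl⟩ : a = 0 ∧ b = 0 := by omega
    simp at hT0
  have := Nat.eq_of_dvd_of_lt_two_mul hab (hg2 ▸ hdvd) (by omega)
  omega

/-- The sequence `g₁^{m-1} g₂^{mn-1} (-g₁+g₂)^{m-1}` over `C_m ⊕ C_{mn}`,
where `{g₁, g₂}` is a generating set with `ord g₂ = mn`, has length `2m + mn - 3 = η(G) - 1`
and no short zero-sum subsequence. -/
theorem stmt_1 (m n : ℕ) (hm : 2 ≤ m) (hn : 0 < n)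
    (g1 g2 : ZMod m × ZMod (m * n)) (hne : g1 ≠ g2)
    (hg2 : addOrderOf g2 = m * n)
    (hgen : AddSubgroup.closure ({g1, g2} : Set (ZMod m × ZMod (m * n))) = ⊤) :
    (Multiset.replicate (m - 1) g1 + Multiset.replicate (m * n - 1) g2 +
        Multiset.replicate (m - 1) (-g1 + g2)).card = 2 * m + m * n - 3 ∧
    ¬ ∃ T ≤ Multiset.replicate (m - 1) g1 + Multiset.replicate (m * n - 1) g2 +
        Multiset.replicate (m - 1) (-g1 + g2),
        T ≠ 0 ∧ T.sum = 0 ∧ Multiset.card T ≤ m * n :=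
  stmt_1_general m n hm hn g1 g2 hg2 hgen
end

section
/- Let m, n be positive integers with m ≥ 2, let G = C_m ⊕ C_{mn}, let {g_1, g_2} be a generating set of G consisting of two distinct elements with ord(g_2) = mn, and let g ∈ G. Then the sequence S = g^{mn−1} · (g_1 + g)^{m−1} · (g_2 + g)^{mn−1} · (−g_1 + g_2 + g)^{m−1} has length 2m + 2mn − 4 (which equals s(G) − 1) and has no zero-sum subsequence of length mn = exp(G). -/
/-!
Write a length-`mn` subsequence as `g^a (g₁+g)^b (g₂+g)^c (-g₁+g₂+g)^d`. Since `a+b+c+d = mn`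
kills `g`, a zero sum means `(b-d)g₁ + (c+d)g₂ = 0`. Modulo `⟨g₂⟩`, a cyclic group of order `m`
generated by `g₁`, this forces `m ∣ b-d`, so `b = d`; then `mn ∣ c+d`, and the multiplicity bounds
leave only `c + d ∈ {0, mn}`, both of which overflow one of the blocks.
-/

theorem Multiset.exists_eq_add_of_le_add {α : Type*} [DecidableEq α] {T A B : Multiset α}
    (h : T ≤ A + B) : ∃ u ≤ A, ∃ v ≤ B, T = u + v := by
  refine ⟨T ∩ A, Multiset.inter_le_right, T - A, by simpa using tsub_le_tsub_right h A, ?_⟩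
  ext x
  simp only [Multiset.count_add, Multiset.count_inter, Multiset.count_sub]
  omega

theorem Multiset.exists_eq_add_replicate_of_le_add_replicate {α : Type*} {T S : Multiset α}
    {k : ℕ} {x : α} (h : T ≤ S + Multiset.replicate k x) :
    ∃ T' ≤ S, ∃ j ≤ k, T = T' + Multiset.replicate j x := by
  classical
  obtain ⟨T', hT', v, hv, rfl⟩ := Multiset.exists_eq_add_of_le_add h
  obtain ⟨j, hj, rfl⟩ := Multiset.le_replicate_iff.1 hv
  exact ⟨T', hT', j, hj, rfl⟩

theorem AddSubgroup.zmultiples_mk_eq_top_of_closure_pair {G : Type*} [AddCommGroup G] {a b : G}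
    (hgen : AddSubgroup.closure {a, b} = ⊤) :
    AddSubgroup.zmultiples (QuotientAddGroup.mk a : G ⧸ AddSubgroup.zmultiples b) = ⊤ := by
  refine eq_top_iff.2 fun y _ => ?_
  obtain ⟨z, rfl⟩ := QuotientAddGroup.mk_surjective y
  obtain ⟨i, j, rfl⟩ := AddSubgroup.mem_closure_pair.1 (hgen ▸ AddSubgroup.mem_top z)
  exact ⟨i, by simp⟩

theorem AddSubgroup.index_zmultiples_dvd_of_zsmul_mem {G : Type*} [AddCommGroup G] {a b : G}
    (hgen : AddSubgroup.closure {a, b} = ⊤) {x : ℤ} (hx : x • a ∈ AddSubgroup.zmultiples b) :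
    ((AddSubgroup.zmultiples b).index : ℤ) ∣ x := by
  have hord : addOrderOf (QuotientAddGroup.mk a : G ⧸ AddSubgroup.zmultiples b) =
      (AddSubgroup.zmultiples b).index := by
    rw [← Nat.card_zmultiples, zmultiples_mk_eq_top_of_closure_pair hgen, AddSubgroup.card_top,
      AddSubgroup.index]
  rw [← hord, addOrderOf_dvd_iff_zsmul_eq_zero, ← QuotientAddGroup.mk_zsmul]
  exact (QuotientAddGroup.eq_zero_iff _).2 hx

theorem shifted_nsmul_sum_eq {G : Type*} [AddCommGroup G] (a b c d : ℕ) (g g1 g2 : G) :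
    a • g + b • (g1 + g) + c • (g2 + g) + d • (-g1 + g2 + g) =
      ((b : ℤ) - d) • g1 + ((c : ℤ) + d) • g2 + (a + b + c + d) • g := by
  simp only [← natCast_zsmul]
  push_cast
  simp only [smul_add, add_smul, sub_smul, smul_neg]
  abel

namespace ZMod

variable {m n : ℕ}

theorem prod_nsmul_eq_zero_of_dvd {k : ℕ} (hmk : m ∣ k) (x : ZMod m × ZMod k) : k • x = 0 := by
  ext
  · simp [nsmul_eq_mul, (natCast_eq_zero_iff k m).2 hmk]
  · simp [nsmul_eq_mul]

variable [NeZero m] [NeZero n]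

theorem index_zmultiples_eq_of_addOrderOf_eq {g : ZMod m × ZMod (m * n)}
    (hg : addOrderOf g = m * n) : (AddSubgroup.zmultiples g).index = m := by
  have h := (AddSubgroup.zmultiples g).index_mul_card
  rw [Nat.card_zmultiples, hg, Nat.card_prod, Nat.card_zmod, Nat.card_zmod] at h
  exact Nat.eq_of_mul_eq_mul_right (Nat.pos_of_neZero _) h

theorem dvd_of_zsmul_add_zsmul_eq_zero {g1 g2 : ZMod m × ZMod (m * n)}
    (hg2 : addOrderOf g2 = m * n)
    (hgen : AddSubgroup.closure ({g1, g2} : Set (ZMod m × ZMod (m * n))) = ⊤) {x y : ℤ}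
    (h : x • g1 + y • g2 = 0) : (m : ℤ) ∣ x := by
  rw [← index_zmultiples_eq_of_addOrderOf_eq hg2]
  refine AddSubgroup.index_zmultiples_dvd_of_zsmul_mem hgen ?_
  rw [eq_neg_of_add_eq_zero_left h]
  exact neg_mem (zsmul_mem (AddSubgroup.mem_zmultiples g2) y)

end ZMod

theorem stmt_4_general (m n : ℕ) (hm : 2 ≤ m) (hn : 0 < n)
    (g1 g2 : ZMod m × ZMod (m * n))
    (hg2 : addOrderOf g2 = m * n)
    (hgen : AddSubgroup.closure ({g1, g2} : Set (ZMod m × ZMod (m * n))) = ⊤)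
    (g : ZMod m × ZMod (m * n)) :
    (Multiset.replicate (m * n - 1) g +
        Multiset.replicate (m - 1) (g1 + g) +
        Multiset.replicate (m * n - 1) (g2 + g) +
        Multiset.replicate (m - 1) (-g1 + g2 + g)).card = 2 * m + 2 * (m * n) - 4 ∧
    ¬ ∃ T ≤ Multiset.replicate (m * n - 1) g +
        Multiset.replicate (m - 1) (g1 + g) +
        Multiset.replicate (m * n - 1) (g2 + g) +
        Multiset.replicate (m - 1) (-g1 + g2 + g),
        T.sum = 0 ∧ Multiset.card T = m * n := by
  have hmn : m ≤ m * n := Nat.le_mul_of_pos_right m hn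
  refine ⟨by simp only [Multiset.card_add, Multiset.card_replicate]; omega, ?_⟩
  rintro ⟨T, hT, hsum, hcard⟩
  obtain ⟨Tabc, hTabc, d, hd, rfl⟩ := Multiset.exists_eq_add_replicate_of_le_add_replicate hT
  obtain ⟨Tab, hTab, c, hc, rfl⟩ := Multiset.exists_eq_add_replicate_of_le_add_replicate hTabc
  obtain ⟨Ta, hTa, b, hb, rfl⟩ := Multiset.exists_eq_add_replicate_of_le_add_replicate hTab
  obtain ⟨a, ha, rfl⟩ := Multiset.le_replicate_iff.1 hTa
  simp only [Multiset.card_add, Multiset.card_replicate] at hcard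
  simp only [Multiset.sum_add, Multiset.sum_replicate, shifted_nsmul_sum_eq, hcard,
    ZMod.prod_nsmul_eq_zero_of_dvd (dvd_mul_right m n), add_zero] at hsum
  have : NeZero m := ⟨by omega⟩
  have : NeZero n := ⟨hn.ne'⟩
  obtain rfl : d = b := (Nat.modEq_iff_dvd.2 (ZMod.dvd_of_zsmul_add_zsmul_eq_zero hg2 hgen hsum))
    |>.eq_of_lt_of_lt (by omega) (by omega)
  rw [sub_self, zero_smul, zero_add, ← addOrderOf_dvd_iff_zsmul_eq_zero, hg2] at hsum
  have hdvd : m * n ∣ c + d := by exact_mod_cast hsum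
  exact Nat.not_dvd_of_pos_of_lt (by omega) (by omega) hdvd

/-- The sequence `g^{mn-1} (g₁+g)^{m-1} (g₂+g)^{mn-1} (-g₁+g₂+g)^{m-1}`
over `C_m ⊕ C_{mn}`, where `{g₁, g₂}` is a generating set with `ord g₂ = mn`, has length
`2m + 2mn - 4 = s(G) - 1` and no zero-sum subsequence of length `mn = exp(G)`. -/
theorem stmt_4 (m n : ℕ) (hm : 2 ≤ m) (hn : 0 < n)
    (g1 g2 : ZMod m × ZMod (m * n)) (hne : g1 ≠ g2)
    (hg2 : addOrderOf g2 = m * n)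
    (hgen : AddSubgroup.closure ({g1, g2} : Set (ZMod m × ZMod (m * n))) = ⊤)
    (g : ZMod m × ZMod (m * n)) :
    (Multiset.replicate (m * n - 1) g +
        Multiset.replicate (m - 1) (g1 + g) +
        Multiset.replicate (m * n - 1) (g2 + g) +
        Multiset.replicate (m - 1) (-g1 + g2 + g)).card = 2 * m + 2 * (m * n) - 4 ∧
    ¬ ∃ T ≤ Multiset.replicate (m * n - 1) g +
        Multiset.replicate (m - 1) (g1 + g) +
        Multiset.replicate (m * n - 1) (g2 + g) +
        Multiset.replicate (m - 1) (-g1 + g2 + g),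
        T.sum = 0 ∧ Multiset.card T = m * n :=
  stmt_4_general m n hm hn g1 g2 hg2 hgen g
end
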